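/- arXiv:2004.11029 — 4 statements merged into one kernel-verified Lean document; each statement's English description precedes it below -/
import Mathlib

section
/- The Omega constant Ω, defined by Ω * exp(Ω) = 1, is irrational. -/
/-!
If `Ω = q` were rational, then `exp q = 1 / q` would be rational too, so it suffices that `exp q`
is irrational for every rational `q ≠ 0`; raising to the power `q.den` reduces this to `exp m`
with `m` a nonzero integer. For those we use Hermite's approximations, as packaged for the
Lindemann–Weierstrass theorem: for every large prime `p` there are an integer `n` prime to `p` and
`g ∈ ℤ[X]` with `|n exp m - p g(m)| ≤ c ^ p / (p - 1)!`. If `exp m = a / b`, then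
`b (n exp m - p g(m)) = n a - p b g(m)` is an integer prime to `p`, hence at least `1` in absolute
value, while `b c ^ p / (p - 1)!` tends to `0`.
-/

open Polynomial Filter

open scoped Nat

theorem Rat.one_le_den_mul_abs_mul_sub_mul {p : ℕ} (hp : p.Prime) {q : ℚ}
    (hq : ¬(p : ℤ) ∣ q.num) {n : ℤ} (hn : ¬(p : ℤ) ∣ n) (m : ℤ) :
    1 ≤ q.den * |n * q - p * m| := by
  have hint : (q.den : ℚ) * (n * q - p * m) = ((n * q.num - p * (q.den * m) : ℤ) : ℚ) := by
    push_cast [← Rat.mul_den_eq_num]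
    ring
  have hint_ne : n * q.num - p * (q.den * m) ≠ 0 := by
    intro h
    have hdvd : (p : ℤ) ∣ n * q.num := ⟨q.den * m, by linarith⟩
    rcases (Int.prime_iff_natAbs_prime.2 (by simpa using hp)).dvd_or_dvd hdvd with h | h
    exacts [hn h, hq h]
  rw [← abs_of_pos (show (0 : ℚ) < q.den by positivity), ← abs_mul, hint]
  exact_mod_cast Int.one_le_abs hint_ne

theorem Real.irrational_exp_intCast {s : ℤ} (hs : s ≠ 0) : Irrational (exp s) := by
  rintro ⟨q, hq⟩
  obtain ⟨c, hc⟩ := LindemannWeierstrass.exp_polynomial_approx (X - C s) (by simpa using hs)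
  have hsmall : ∀ᶠ m : ℕ in atTop, q.den * (c ^ (m + 1) / m !) < 1 := by
    have := (FloorSemiring.tendsto_pow_div_factorial_atTop c).const_mul (q.den * c)
    rw [mul_zero] at this
    filter_upwards [this.eventually (gt_mem_nhds one_pos)] with m hm
    refine lt_of_eq_of_lt ?_ hm
    ring
  obtain ⟨N, hN⟩ := eventually_atTop.1 hsmall
  obtain ⟨p, hp_ge, hp⟩ := Nat.exists_infinite_primes (N + s.natAbs + q.num.natAbs + 1)
  obtain ⟨n, hpn, g, -, hg⟩ := hc p (by simp; omega) hp
  have hnum : ¬(p : ℤ) ∣ q.num := by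
    have hq_pos : 0 < q := by exact_mod_cast hq ▸ exp_pos s
    intro h
    have := Int.natAbs_le_of_dvd_ne_zero h (Rat.num_pos.2 hq_pos).ne'
    simp only [Int.natAbs_natCast] at this
    omega
  have hnorm :
      ‖n • Complex.exp s - p • aeval (s : ℂ) g‖ = ((|n * q - p * g.eval s| : ℚ) : ℝ) := by
    have hg_eval : aeval (s : ℂ) g = ((g.eval s : ℤ) : ℂ) := by
      simpa using aeval_algebraMap_apply_eq_algebraMap_eval (A := ℂ) s g
    have hrat :
        n • ((q : ℝ) : ℂ) - p • ((g.eval s : ℤ) : ℂ) = ((n * q - p * g.eval s : ℚ) : ℂ) := by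
      push_cast
      ring
    rw [hg_eval, ← Complex.ofReal_intCast s, ← Complex.ofReal_exp, ← hq, hrat,
      Complex.norm_ratCast, Rat.cast_abs]
  have hlower : (1 : ℝ) ≤ q.den * ‖n • Complex.exp s - p • aeval (s : ℂ) g‖ := by
    rw [hnorm]
    exact_mod_cast Rat.one_le_den_mul_abs_mul_sub_mul hp hnum hpn (g.eval s)
  have hupper := hN (p - 1) (by omega)
  rw [Nat.sub_add_cancel hp.one_le] at hupper
  have happrox := hg (r := s) (by rw [aroots_X_sub_C]; simp)
  nlinarith [Nat.cast_nonneg (α := ℝ) q.den]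

theorem Real.irrational_exp_ratCast {q : ℚ} (hq : q ≠ 0) : Irrational (exp q) := by
  refine .of_pow q.den ?_
  rw [← exp_nat_mul, ← Rat.cast_natCast, ← Rat.cast_mul, mul_comm, Rat.mul_den_eq_num,
    Rat.cast_intCast]
  exact irrational_exp_intCast (Rat.num_ne_zero.2 hq)

theorem omega_irrational (Ω : ℝ) (hΩ : Ω * Real.exp Ω = 1) : Irrational Ω := by
  rintro ⟨q, rfl⟩
  have hq : q ≠ 0 := by
    rintro rfl
    simp at hΩ
  refine Real.irrational_exp_ratCast hq ⟨q⁻¹, ?_⟩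
  rw [Rat.cast_inv, eq_inv_of_mul_eq_one_right hΩ]
end

section
/- The sequence defined by x₀ = 1 and x_{n+1} = (1 + x_n) / (1 + exp(x_n)) converges to the Omega constant Ω, the unique real solution of x * exp(x) = 1. -/
/-!
The map `g x = (1 + x) / (1 + exp x) = x - (x * exp x - 1) / (1 + exp x)` is Newton's method for
`x = exp (-x)`, so its fixed points are exactly the solutions of `x * exp x = 1`. It maps `[0, 1]`
into itself, and there its derivative `(1 - x * exp x) / (1 + exp x) ^ 2` is at most `1 / 2` in
absolute value, because `|1 - x * exp x| ≤ e - 1 < 2` and `(1 + exp x) ^ 2 ≥ 4`. Hence `g` is a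
`1 / 2`-contraction of `[0, 1]`, and the iterates starting at `1` converge to `Ω ∈ [0, 1]`.
-/

open Real Set Filter Topology

theorem tendsto_of_lipschitzOnWith_of_mapsTo {α : Type*} [PseudoMetricSpace α] {f : α → α}
    {s : Set α} {K : NNReal} (hK : K < 1) (hf : LipschitzOnWith K f s) (hfs : MapsTo f s s)
    {p : α} (hp : p ∈ s) (hfp : f p = p) {x : ℕ → α} (hx0 : x 0 ∈ s)
    (hx : ∀ n, x (n + 1) = f (x n)) : Tendsto x atTop (𝓝 p) := by
  have hmem : ∀ n, x n ∈ s := fun n => by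
    induction n with
    | zero => exact hx0
    | succ n ih => exact hx n ▸ hfs ih
  have hdist : ∀ n, dist (x n) p ≤ K ^ n * dist (x 0) p := fun n => by
    induction n with
    | zero => simp
    | succ n ih =>
      calc dist (x (n + 1)) p = dist (f (x n)) (f p) := by rw [hx, hfp]
        _ ≤ K * dist (x n) p := hf.dist_le_mul _ (hmem n) _ hp
        _ ≤ K * (K ^ n * dist (x 0) p) := by gcongr
        _ = K ^ (n + 1) * dist (x 0) p := by ring
  have hpow : Tendsto (fun n => (K : ℝ) ^ n * dist (x 0) p) atTop (𝓝 0) := by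
    simpa using (tendsto_pow_atTop_nhds_zero_of_lt_one K.2 hK).mul_const (dist (x 0) p)
  exact tendsto_iff_dist_tendsto_zero.2 (squeeze_zero (fun _ => dist_nonneg) hdist hpow)

noncomputable def omegaStep (x : ℝ) : ℝ := (1 + x) / (1 + exp x)

theorem hasDerivAt_omegaStep (x : ℝ) :
    HasDerivAt omegaStep ((1 - x * exp x) / (1 + exp x) ^ 2) x := by
  have hnum : HasDerivAt (fun y => 1 + y) 1 x := (hasDerivAt_id x).const_add 1
  have hden : HasDerivAt (fun y => 1 + exp y) (exp x) x := (hasDerivAt_exp x).const_add 1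
  exact (hnum.div hden (by positivity)).congr_deriv (by ring)

theorem abs_deriv_omegaStep_le {x : ℝ} (hx : x ∈ Icc (0 : ℝ) 1) :
    |(1 - x * exp x) / (1 + exp x) ^ 2| ≤ 1 / 2 := by
  obtain ⟨hx0, hx1⟩ := hx
  have hexp_one : exp x ≤ exp 1 := exp_le_exp.2 hx1
  have he : exp 1 < 3 := exp_one_lt_d9.trans (by norm_num)
  have hone_le : 1 ≤ exp x := one_le_exp hx0
  have hnum : |1 - x * exp x| ≤ 2 := by
    rw [abs_le]
    constructor <;> nlinarith
  have hden : 4 ≤ (1 + exp x) ^ 2 := by nlinarith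
  rw [abs_div, abs_of_pos (by positivity : (0 : ℝ) < (1 + exp x) ^ 2)]
  calc |1 - x * exp x| / (1 + exp x) ^ 2 ≤ 2 / 4 := div_le_div₀ (by norm_num) hnum (by norm_num) hden
    _ = 1 / 2 := by norm_num

theorem lipschitzOnWith_omegaStep : LipschitzOnWith (1 / 2) omegaStep (Icc 0 1) := by
  refine (convex_Icc 0 1).lipschitzOnWith_of_nnnorm_hasDerivWithin_le
    (fun y _ => (hasDerivAt_omegaStep y).hasDerivWithinAt) fun y hy => ?_
  rw [← NNReal.coe_le_coe, coe_nnnorm, norm_eq_abs]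
  simpa using abs_deriv_omegaStep_le hy

theorem mapsTo_omegaStep : MapsTo omegaStep (Icc 0 1) (Icc 0 1) := by
  intro y ⟨hy0, _⟩
  have hpos : 0 < 1 + exp y := by positivity
  refine ⟨div_nonneg (by linarith) hpos.le, (div_le_one hpos).2 ?_⟩
  linarith [add_one_le_exp y, exp_pos y]

theorem omegaStep_eq_self_of_mul_exp_eq_one {Ω : ℝ} (hΩ : Ω * exp Ω = 1) : omegaStep Ω = Ω := by
  rw [omegaStep, div_eq_iff (by positivity)]
  linarith

theorem mem_Icc_of_mul_exp_eq_one {Ω : ℝ} (hΩ : Ω * exp Ω = 1) : Ω ∈ Icc (0 : ℝ) 1 := by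
  have hexp : 0 < exp Ω := exp_pos Ω
  constructor
  · by_contra! h
    nlinarith
  · by_contra! h
    nlinarith [one_lt_exp_iff.2 (zero_lt_one.trans h)]

theorem omega_iteration_tendsto (Ω : ℝ) (hΩ : Ω * Real.exp Ω = 1)
    (x : ℕ → ℝ) (h0 : x 0 = 1)
    (hrec : ∀ n, x (n + 1) = (1 + x n) / (1 + Real.exp (x n))) :
    Filter.Tendsto x Filter.atTop (nhds Ω) :=
  tendsto_of_lipschitzOnWith_of_mapsTo (by norm_num) lipschitzOnWith_omegaStep mapsTo_omegaStep
    (mem_Icc_of_mul_exp_eq_one hΩ) (omegaStep_eq_self_of_mul_exp_eq_one hΩ)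
    (by rw [h0]; exact right_mem_Icc.2 zero_le_one) hrec
end

section
/- The power series ∑_{n≥1} (-1)^{n-1} n^{n-1} x^n / n! has radius of convergence exactly 1/e. -/
/-! Ratio test: consecutive coefficients have ratio `(1 + 1/n)^(n-1)`, which tends to `e`. -/

/-- The formal multilinear series of `∑_{n≥1} (-1)^{n-1} n^{n-1} xⁿ / n!`. -/
noncomputable def lambertWSeries : FormalMultilinearSeries ℝ ℝ ℝ := fun n =>
  (if n = 0 then (0 : ℝ) else (-1) ^ (n - 1) * (n : ℝ) ^ (n - 1) / n.factorial) •
    ContinuousMultilinearMap.mkPiAlgebraFin ℝ n ℝ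

open Real Filter Topology

lemma tendsto_one_add_div_pow_pred_exp (t : ℝ) :
    Tendsto (fun n : ℕ ↦ (1 + t / n) ^ (n - 1)) atTop (𝓝 (exp t)) := by
  have hbase : Tendsto (fun n : ℕ ↦ 1 + t / n) atTop (𝓝 1) := by
    simpa using tendsto_const_nhds.add (tendsto_const_div_atTop_nhds_zero_nat t)
  have hquot := (tendsto_one_add_div_pow_exp t).div hbase one_ne_zero
  rw [div_one] at hquot
  refine hquot.congr' ?_
  filter_upwards [hbase.eventually_ne one_ne_zero, eventually_ge_atTop 1] with n hne hn
  rw [Pi.div_apply, div_eq_iff hne, ← pow_succ, Nat.sub_add_cancel hn]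

noncomputable def lambertWCoeff (n : ℕ) : ℝ :=
  if n = 0 then 0 else (-1) ^ (n - 1) * (n : ℝ) ^ (n - 1) / n.factorial

lemma lambertWSeries_eq_ofScalars :
    lambertWSeries = FormalMultilinearSeries.ofScalars ℝ lambertWCoeff := rfl

lemma norm_lambertWCoeff {n : ℕ} (hn : n ≠ 0) :
    ‖lambertWCoeff n‖ = (n : ℝ) ^ (n - 1) / n.factorial := by
  simp [lambertWCoeff, hn]

lemma norm_lambertWCoeff_succ_div {n : ℕ} (hn : n ≠ 0) :
    ‖lambertWCoeff (n + 1)‖ / ‖lambertWCoeff n‖ = (1 + 1 / n) ^ (n - 1) := by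
  have hpos : (0 : ℝ) < n := by positivity
  have hpow : ((n : ℝ) + 1) ^ n = ((n : ℝ) + 1) ^ (n - 1) * (n + 1) := by
    rw [← pow_succ, Nat.sub_add_cancel (Nat.one_le_iff_ne_zero.mpr hn)]
  rw [norm_lambertWCoeff hn, norm_lambertWCoeff n.succ_ne_zero, Nat.succ_sub_one,
    Nat.factorial_succ, one_add_div hpos.ne', div_pow]
  push_cast
  rw [hpow]
  field_simp

lemma tendsto_norm_lambertWCoeff_succ_div :
    Tendsto (fun n ↦ ‖lambertWCoeff n.succ‖ / ‖lambertWCoeff n‖) atTop (𝓝 (exp 1)) :=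
  (tendsto_one_add_div_pow_pred_exp 1).congr' <| by
    filter_upwards [eventually_ne_atTop 0] with n hn
    rw [norm_lambertWCoeff_succ_div hn]

theorem lambertWSeries_radius :
    lambertWSeries.radius = ENNReal.ofReal (Real.exp 1)⁻¹ := by
  have hr : (exp 1).toNNReal ≠ 0 := by simpa using exp_pos 1
  rw [lambertWSeries_eq_ofScalars,
    FormalMultilinearSeries.ofScalars_radius_eq_inv_of_tendsto ℝ _ hr
      (by simpa [(exp_pos 1).le] using tendsto_norm_lambertWCoeff_succ_div),
    ENNReal.ofReal, toNNReal_inv]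
end

section
/- The formal power series identity ∏_{n≥1} (1 - x^n)^{-μ(n)/n} = exp(x) holds over ℚ, where μ is the Möbius function. -/
open scoped Classical

/-- Composition `f ∘ g` of formal power series over ℚ (intended for `g` with zero
constant term). -/
noncomputable def PowerSeries.comp (f g : PowerSeries ℚ) : PowerSeries ℚ :=
  PowerSeries.mk fun n =>
    ∑ k ∈ Finset.range (n + 1), (PowerSeries.coeff k f) * PowerSeries.coeff n (g ^ k)

/-- The formal power series `log (1 - xⁿ) = -∑_{k≥1} x^{nk}/k`. -/
noncomputable def logOneSubPow (n : ℕ) : PowerSeries ℚ :=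
  PowerSeries.mk fun m =>
    if m ≠ 0 ∧ n ∣ m then -(1 / ((m / n : ℕ) : ℚ)) else 0

/-- The factor `(1 - xⁿ)^{-μ(n)/n}`, interpreted as
`exp (-(μ(n)/n) · log (1 - xⁿ))`. -/
noncomputable def moebiusFactor (n : ℕ) : PowerSeries ℚ :=
  PowerSeries.comp (PowerSeries.exp ℚ)
    ((-(ArithmeticFunction.moebius n : ℚ) / n) • logOneSubPow n)

/-!
Write the `n`-th factor as `exp (L n)` with `L n = -(μ(n)/n) · log (1 - xⁿ)`. Since
`exp (F + G) = exp F · exp G` (both sides solve `E' = E · (F + G)'` with `E(0) = 1`), the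
product is `exp (∑ L n)`. For `1 ≤ j ≤ m` the `j`-th coefficient of `∑_{n ≤ m} L n` is
`(1/j) ∑_{d ∣ j} μ(d) = [j = 1]`, so up to degree `m` the exponent is `x`, and the `m`-th
coefficient of `exp` of a series only sees its coefficients up to degree `m`.
-/

namespace PowerSeries

section ExpSubst

variable {K : Type*} [Field K] [Algebra ℚ K]

theorem derivative_exp_subst {g : K⟦X⟧} (hg : HasSubst g) :
    d⁄dX K ((exp K).subst g) = (exp K).subst g * d⁄dX K g := by
  rw [derivative_subst hg, derivative_exp]

theorem constantCoeff_exp_subst {g : K⟦X⟧} (hg : constantCoeff g = 0) :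
    constantCoeff ((exp K).subst g) = 1 := by
  have h := constantCoeff_subst_eq_zero (a := g) hg (exp K - 1) (by simp)
  rw [subst_sub (HasSubst.of_constantCoeff_zero' hg), ← map_one (C (R := K)), subst_C] at h
  simpa [sub_eq_zero, constantCoeff_eq] using h

theorem eq_exp_subst_of_derivative_eq {A P : K⟦X⟧} (hA : constantCoeff A = 0)
    (hP : d⁄dX K P = P * d⁄dX K A) (hP₀ : constantCoeff P = 1) :
    P = (exp K).subst A := by
  have : IsAddTorsionFree K := .of_module_rat K
  set E := (exp K).subst A
  have hE : d⁄dX K E = E * d⁄dX K A := derivative_exp_subst (.of_constantCoeff_zero' hA)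
  have hE₀ : constantCoeff E = 1 := constantCoeff_exp_subst hA
  have hEinv : E⁻¹ * E = 1 := PowerSeries.inv_mul_cancel _ (by simp [hE₀])
  have hPE : P * E⁻¹ = 1 := by
    refine derivative.ext ?_ (by simp [hP₀, hE₀])
    rw [Derivation.leibniz, derivative_inv', hP, hE, derivative_one, smul_eq_mul, smul_eq_mul]
    linear_combination (-(P * E⁻¹ * d⁄dX K A)) * hEinv
  calc P = P * E⁻¹ * E := by rw [mul_assoc, hEinv, mul_one]
    _ = E := by rw [hPE, one_mul]

theorem exp_subst_add {F G : K⟦X⟧} (hF : constantCoeff F = 0) (hG : constantCoeff G = 0) :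
    (exp K).subst (F + G) = (exp K).subst F * (exp K).subst G := by
  refine (eq_exp_subst_of_derivative_eq (by simp [hF, hG]) ?_ ?_).symm
  · rw [Derivation.leibniz, derivative_exp_subst (.of_constantCoeff_zero' hF),
      derivative_exp_subst (.of_constantCoeff_zero' hG), map_add, smul_eq_mul, smul_eq_mul]
    ring
  · simp [constantCoeff_exp_subst hF, constantCoeff_exp_subst hG]

theorem prod_exp_subst {ι : Type*} (s : Finset ι) {F : ι → K⟦X⟧}
    (hF : ∀ i ∈ s, constantCoeff (F i) = 0) :
    ∏ i ∈ s, (exp K).subst (F i) = (exp K).subst (∑ i ∈ s, F i) := by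
  induction s using Finset.cons_induction with
  | empty => simp [subst_zero_eq_C_constantCoeff]
  | cons a s _ ih =>
    have hs : ∀ i ∈ s, constantCoeff (F i) = 0 := fun i hi ↦ hF i (Finset.mem_cons_of_mem hi)
    rw [Finset.prod_cons, Finset.sum_cons, ih hs, exp_subst_add (hF a (Finset.mem_cons_self a s))
      (by rw [map_sum]; exact Finset.sum_eq_zero hs)]

end ExpSubst

theorem coeff_subst_eq_of_trunc_eq {R : Type*} [CommRing R] {f F G : R⟦X⟧} (hF : HasSubst F)
    (hG : HasSubst G) {m : ℕ} (h : trunc (m + 1) F = trunc (m + 1) G) :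
    coeff m (f.subst F) = coeff m (f.subst G) := by
  rw [coeff_subst' hF, coeff_subst' hG]
  refine finsum_congr fun d ↦ congrArg (coeff d f • ·) ?_
  have key := congrArg (Polynomial.coeff · m) (trunc_trunc_pow G (m + 1) d)
  rw [← h, trunc_trunc_pow] at key
  simpa [coeff_trunc] using key

theorem comp_eq_subst {f g : ℚ⟦X⟧} (hg : constantCoeff g = 0) : f.comp g = f.subst g := by
  ext n
  rw [coeff_subst' (.of_constantCoeff_zero' hg),
    finsum_eq_sum_of_support_subset _ (s := Finset.range (n + 1))]
  · simp [comp]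
  · intro d hd
    by_contra hdn
    have hlt : (n : ℕ∞) < (g ^ d).order :=
      (le_order_pow_of_constantCoeff_eq_zero d hg).trans_lt' (by simpa using hdn)
    exact hd (by simp [coeff_of_lt_order n hlt])

end PowerSeries

open PowerSeries ArithmeticFunction
open scoped ArithmeticFunction.Moebius

theorem sum_divisors_moebius (j : ℕ) :
    ∑ d ∈ j.divisors, (μ d : ℚ) = if j = 1 then 1 else 0 := by
  have h := congrArg (· j) (coe_moebius_mul_coe_zeta (R := ℚ))
  simp only [coe_mul_zeta_apply, intCoe_apply, one_apply] at h
  exact h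

theorem coeff_logOneSubPow {n j : ℕ} (hn : n ≠ 0) (hj : j ≠ 0) :
    coeff j (logOneSubPow n) = if n ∣ j then -(n / j : ℚ) else 0 := by
  simp only [logOneSubPow, coeff_mk, ne_eq, hj, not_false_eq_true, true_and]
  split_ifs with hd
  · rw [Nat.cast_div hd (by exact_mod_cast hn)]
    field_simp
  · rfl

noncomputable def moebiusLog (n : ℕ) : ℚ⟦X⟧ :=
  (-(μ n : ℚ) / n) • logOneSubPow n

@[simp]
theorem constantCoeff_moebiusLog (n : ℕ) : constantCoeff (moebiusLog n) = 0 := by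
  simp [moebiusLog, logOneSubPow, ← coeff_zero_eq_constantCoeff_apply]

theorem moebiusFactor_eq_exp_subst (n : ℕ) : moebiusFactor n = (exp ℚ).subst (moebiusLog n) :=
  comp_eq_subst (constantCoeff_moebiusLog n)

theorem coeff_moebiusLog {n j : ℕ} (hn : n ≠ 0) (hj : j ≠ 0) :
    coeff j (moebiusLog n) = if n ∣ j then (μ n / j : ℚ) else 0 := by
  rw [moebiusLog, map_smul, coeff_logOneSubPow hn hj, smul_eq_mul]
  split_ifs
  · field_simp
  · rw [mul_zero]

theorem coeff_sum_moebiusLog {m j : ℕ} (hj : j ≤ m) :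
    coeff j (∑ n ∈ Finset.Icc 1 m, moebiusLog n) = coeff j X := by
  rcases eq_or_ne j 0 with rfl | hj₀
  · simp
  calc coeff j (∑ n ∈ Finset.Icc 1 m, moebiusLog n)
      = ∑ n ∈ Finset.Icc 1 m, if n ∣ j then (μ n / j : ℚ) else 0 := by
        rw [map_sum]
        exact Finset.sum_congr rfl fun n hn ↦ coeff_moebiusLog (by simp at hn; omega) hj₀
    _ = ∑ n ∈ j.divisors, (μ n / j : ℚ) := by
        rw [← Finset.sum_filter]
        congr 1
        ext n
        simp only [Finset.mem_filter, Finset.mem_Icc, Nat.mem_divisors]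
        exact ⟨fun h ↦ ⟨h.2, hj₀⟩, fun ⟨hd, _⟩ ↦
          ⟨⟨Nat.pos_of_dvd_of_pos hd (by omega), (Nat.le_of_dvd (by omega) hd).trans hj⟩, hd⟩⟩
    _ = coeff j X := by
        rw [← Finset.sum_div, sum_divisors_moebius, coeff_X]
        split_ifs <;> simp_all

/-- The infinite product converges coefficientwise: its `m`-th coefficient only involves the
factors with `1 ≤ n ≤ m`. -/
theorem moebius_product_eq_exp :
    ∀ m : ℕ, PowerSeries.coeff m (∏ n ∈ Finset.Icc 1 m, moebiusFactor n) =
      PowerSeries.coeff m (PowerSeries.exp ℚ) := by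
  intro m
  have htrunc : trunc (m + 1) (∑ n ∈ Finset.Icc 1 m, moebiusLog n) = trunc (m + 1) X := by
    ext j
    rw [coeff_trunc, coeff_trunc]
    split_ifs with hj
    exacts [coeff_sum_moebiusLog (by omega), rfl]
  have hsubst : HasSubst (∑ n ∈ Finset.Icc 1 m, moebiusLog n) :=
    .of_constantCoeff_zero' (by simp)
  rw [Finset.prod_congr rfl fun n _ ↦ moebiusFactor_eq_exp_subst n,
    prod_exp_subst _ fun n _ ↦ constantCoeff_moebiusLog n,
    coeff_subst_eq_of_trunc_eq hsubst HasSubst.X' htrunc, X_subst]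
end
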